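/- There exists a finite alphabet X, a cost function c on (X ∪ {−})² that is non-negative, symmetric, and zero on the diagonal but violates the triangle inequality, and trees x̄, ȳ over X, such that the mapping distance strictly overestimates the tree edit distance: D_c(x̄, ȳ) > d_c(x̄, ȳ). -/

import Mathlib

/-- A rooted ordered tree with labels from `X`. -/
inductive PTree (X : Type) : Type where
  | node : X → List (PTree X) → PTree X

namespace PTree

variable {X : Type}

mutual
  /-- The labels of a tree in pre-order. -/
  def preorder : PTree X → List X
    | .node l cs => l :: preorderF cs
  /-- The labels of a forest in pre-order. -/
  def preorderF : List (PTree X) → List X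
    | [] => []
    | t :: ts => preorder t ++ preorderF ts
end

/-- The size of a tree (number of nodes). -/
def size (t : PTree X) : ℕ := (preorder t).length

/-- `Deletes f g l` holds iff the forest `g` is obtained from the forest `f` by
deleting one node labeled `l`, attaching its children in its place. -/
inductive Deletes : List (PTree X) → List (PTree X) → X → Prop where
  | here (l : X) (cs rest : List (PTree X)) :
      Deletes (.node l cs :: rest) (cs ++ rest) l
  | child {cs cs' : List (PTree X)} {l : X} (z : X) (rest : List (PTree X)) :
      Deletes cs cs' l → Deletes (.node z cs :: rest) (.node z cs' :: rest) l
  | skip {rest rest' : List (PTree X)} {l : X} (t : PTree X) :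
      Deletes rest rest' l → Deletes (t :: rest) (t :: rest') l

/-- `Replaces f g l l'` holds iff the forest `g` is obtained from the forest `f` by
changing the label `l` of one node into `l'`. -/
inductive Replaces : List (PTree X) → List (PTree X) → X → X → Prop where
  | here (l l' : X) (cs rest : List (PTree X)) :
      Replaces (.node l cs :: rest) (.node l' cs :: rest) l l'
  | child {cs cs' : List (PTree X)} {l l' : X} (z : X) (rest : List (PTree X)) :
      Replaces cs cs' l l' → Replaces (.node z cs :: rest) (.node z cs' :: rest) l l'
  | skip {rest rest' : List (PTree X)} {l l' : X} (t : PTree X) :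
      Replaces rest rest' l l' → Replaces (t :: rest) (t :: rest') l l'

/-- `EditStep c f g r` holds iff one tree edit (a deletion, an insertion, or a
replacement) of cost `r` under the cost function `c` transforms the forest `f`
into the forest `g`. The gap symbol `−` is represented by `none`:
deleting label `l` costs `c (some l) none`, inserting label `l` costs
`c none (some l)`, and replacing label `l` by `l'` costs `c (some l) (some l')`.
An insertion is exactly the inverse of a deletion (the inserted node may adopt
a consecutive run of existing siblings as children). -/
inductive EditStep (c : Option X → Option X → ℝ) :
    List (PTree X) → List (PTree X) → ℝ → Prop where
  | del {f g : List (PTree X)} {l : X} :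
      Deletes f g l → EditStep c f g (c (some l) none)
  | ins {f g : List (PTree X)} {l : X} :
      Deletes g f l → EditStep c f g (c none (some l))
  | rep {f g : List (PTree X)} {l l' : X} :
      Replaces f g l l' → EditStep c f g (c (some l) (some l'))

/-- `Script c f g r` holds iff some edit script (finite sequence of edits) of
total cost `r` under the cost function `c` transforms the forest `f` into the
forest `g`. -/
inductive Script (c : Option X → Option X → ℝ) :
    List (PTree X) → List (PTree X) → ℝ → Prop where
  | nil (f : List (PTree X)) : Script c f f 0
  | cons {f g h : List (PTree X)} {r s : ℝ} :
      EditStep c f g r → Script c g h s → Script c f h (r + s)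

/-- The tree edit distance `d_c`: the infimum of the costs of all edit scripts
transforming the tree `x` into the tree `y`. -/
noncomputable def editDist (c : Option X → Option X → ℝ) (x y : PTree X) : ℝ :=
  sInf {r : ℝ | Script c [x] [y] r}

mutual
  /-- In pre-order: for every node of the tree, the size of the subtree rooted
  at that node. -/
  def subtreeSizes : PTree X → List ℕ
    | .node l cs => size (.node l cs) :: subtreeSizesF cs
  /-- In pre-order: for every node of the forest, the size of the subtree rooted
  at that node. -/
  def subtreeSizesF : List (PTree X) → List ℕ
    | [] => []
    | t :: ts => subtreeSizes t ++ subtreeSizesF ts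
end

/-- The label of the `i`-th node of `t` in pre-order (`0`-based). -/
def label (t : PTree X) (i : Fin (size t)) : X := (preorder t).get i

/-- The `i`-th node of `t` (in `0`-based pre-order) is an ancestor of the
`j`-th node, characterized via pre-order indices and subtree sizes. -/
def IsAncestor (t : PTree X) (i j : ℕ) : Prop :=
  i < j ∧ j < i + (subtreeSizes t).getD i 0

/-- A tree mapping between `x` and `y`: a set of pairs of (`0`-based pre-order)
node indices such that every index occurs in at most one pair, the mapping is
order-preserving, and it is ancestor-preserving. -/
def IsTreeMapping (x y : PTree X) (M : Finset (Fin (size x) × Fin (size y))) : Prop :=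
  ∀ p ∈ M, ∀ q ∈ M,
    (p.1 = q.1 ↔ p.2 = q.2) ∧ (p.1 < q.1 ↔ p.2 < q.2) ∧
    (IsAncestor x ↑p.1 ↑q.1 ↔ IsAncestor y ↑p.2 ↑q.2)

/-- The cost of a tree mapping `M` under the cost function `c`: matched pairs
of nodes pay the replacement cost, unmatched nodes of `x` pay the deletion
cost, unmatched nodes of `y` pay the insertion cost. -/
def mappingCost (c : Option X → Option X → ℝ) (x y : PTree X)
    (M : Finset (Fin (size x) × Fin (size y))) : ℝ :=
  (∑ p ∈ M, c (some (label x p.1)) (some (label y p.2)))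
    + (∑ i ∈ Finset.univ.filter (fun i : Fin (size x) => ∀ p ∈ M, p.1 ≠ i),
        c (some (label x i)) none)
    + (∑ j ∈ Finset.univ.filter (fun j : Fin (size y) => ∀ p ∈ M, p.2 ≠ j),
        c none (some (label y j)))

/-- The mapping distance `D_c` (the quantity computed by the dynamic
programming scheme of Zhang and Shasha): the minimal cost of a tree mapping
between `x` and `y`. -/
noncomputable def mapDist (c : Option X → Option X → ℝ) (x y : PTree X) : ℝ :=
  sInf {r : ℝ | ∃ M, IsTreeMapping x y M ∧ mappingCost c x y M = r}

end PTree

/-- A pseudo-metric on a type `S`: non-negative, symmetric, zero on the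
diagonal, and satisfying the triangle inequality. -/
def IsPseudoMetric {S : Type} (c : S → S → ℝ) : Prop :=
  (∀ a b, 0 ≤ c a b) ∧ (∀ a b, c a b = c b a) ∧ (∀ a, c a a = 0) ∧
    (∀ a b d, c a d ≤ c a b + c b d)

/-!
An edit script may relabel a node several times, a tree mapping pairs each node at most once.
Under a cost in which the label `2` is a cheap detour between the far-apart labels `0` and `1`,
relabelling the one-node tree `0` into `1` via `2` costs `2`, whereas a mapping between the two
one-node trees either matches their roots (cost `10`) or deletes and inserts them (cost `20`).
-/

namespace PTree

variable {X : Type} {c : Option X → Option X → ℝ}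

theorem Script.nonneg (hc : ∀ a b, 0 ≤ c a b) {f g : List (PTree X)} {r : ℝ}
    (h : Script c f g r) : 0 ≤ r := by
  induction h with
  | nil => exact le_rfl
  | cons step _ ih => cases step <;> exact add_nonneg (hc _ _) ih

theorem editDist_le_of_script (hc : ∀ a b, 0 ≤ c a b) {x y : PTree X} {r : ℝ}
    (h : Script c [x] [y] r) : editDist c x y ≤ r :=
  csInf_le ⟨0, fun _ hs => hs.nonneg hc⟩ h

theorem editDist_node_le_relabel_via (hc : ∀ a b, 0 ≤ c a b) (a m b : X)
    (cs : List (PTree X)) :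
    editDist c (node a cs) (node b cs) ≤ c (some a) (some m) + c (some m) (some b) := by
  simpa using editDist_le_of_script hc
    (.cons (.rep (.here a m cs [])) (.cons (.rep (.here m b cs [])) (.nil _)))

instance (a : X) : Unique (Fin (size (node a []))) :=
  inferInstanceAs (Unique (Fin 1))

@[simp]
theorem label_leaf (a : X) (i : Fin (size (node a []))) : label (node a []) i = a := by
  rw [Subsingleton.elim i default]; rfl

theorem isTreeMapping_leaf (a b : X)
    (M : Finset (Fin (size (node a [])) × Fin (size (node b [])))) :
    IsTreeMapping (node a []) (node b []) M := by
  intro p _ q _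
  simp [Subsingleton.elim p q, IsAncestor]

theorem mappingCost_leaf_empty (a b : X) :
    mappingCost c (node a []) (node b []) ∅ = c (some a) none + c none (some b) := by
  simp [mappingCost]

theorem mappingCost_leaf_univ (a b : X) :
    mappingCost c (node a []) (node b []) Finset.univ = c (some a) (some b) := by
  simp [mappingCost]

theorem mapDist_leaf (a b : X) :
    mapDist c (node a []) (node b []) =
      min (c (some a) (some b)) (c (some a) none + c none (some b)) := by
  have hcosts : {r | ∃ M, IsTreeMapping (node a []) (node b []) M ∧
      mappingCost c (node a []) (node b []) M = r} =
      {c (some a) (some b), c (some a) none + c none (some b)} := by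
    ext r
    constructor
    · rintro ⟨M, -, rfl⟩
      rcases M.eq_empty_or_nonempty with rfl | hM
      · exact .inr (mappingCost_leaf_empty a b)
      · exact .inl (hM.eq_univ ▸ mappingCost_leaf_univ a b)
    · rintro (rfl | rfl)
      · exact ⟨_, isTreeMapping_leaf a b _, mappingCost_leaf_univ a b⟩
      · exact ⟨_, isTreeMapping_leaf a b _, mappingCost_leaf_empty a b⟩
  rw [mapDist, hcosts, csInf_pair]

end PTree

noncomputable def detourCost : Option (Fin 3) → Option (Fin 3) → ℝ := fun u v =>
  if u = v then 0 else if u = some 2 ∨ v = some 2 then 1 else 10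

theorem detourCost_nonneg (u v : Option (Fin 3)) : 0 ≤ detourCost u v := by
  unfold detourCost
  split_ifs <;> norm_num

theorem detourCost_comm (u v : Option (Fin 3)) : detourCost u v = detourCost v u := by
  unfold detourCost
  split_ifs <;> simp_all [eq_comm]

theorem detourCost_self (u : Option (Fin 3)) : detourCost u u = 0 := if_pos rfl

/-- There exist a finite alphabet `X`, a cost function `c` on
`(X ∪ {−})²` which is non-negative, symmetric, and zero on the diagonal but
violates the triangle inequality, and trees `x̄`, `ȳ` over `X`, such that the
mapping distance strictly overestimates the tree edit distance:
`D_c(x̄, ȳ) > d_c(x̄, ȳ)`. -/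
theorem mapDist_can_overestimate_editDist :
    ∃ (X : Type) (_ : Fintype X) (c : Option X → Option X → ℝ)
      (x y : PTree X),
      (∀ a b, 0 ≤ c a b) ∧ (∀ a b, c a b = c b a) ∧ (∀ a, c a a = 0) ∧
      (∃ a b d : Option X, c a d > c a b + c b d) ∧
      PTree.mapDist c x y > PTree.editDist c x y := by
  have detour_violates_triangle :
      detourCost (some 0) (some 1) >
        detourCost (some 0) (some 2) + detourCost (some 2) (some 1) := by
    norm_num [detourCost, Fin.ext_iff]
  refine ⟨Fin 3, inferInstance, detourCost, .node 0 [], .node 1 [], detourCost_nonneg,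
    detourCost_comm, detourCost_self, ⟨_, _, _, detour_violates_triangle⟩, ?_⟩
  calc PTree.editDist detourCost (.node 0 []) (.node 1 [])
      ≤ detourCost (some 0) (some 2) + detourCost (some 2) (some 1) :=
        PTree.editDist_node_le_relabel_via detourCost_nonneg 0 2 1 []
    _ < detourCost (some 0) (some 1) := detour_violates_triangle
    _ = PTree.mapDist detourCost (.node 0 []) (.node 1 []) := by
        rw [PTree.mapDist_leaf, min_eq_left (by simp [detourCost])]
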